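/- Let A = ⊕_{k≥0} ℂ[x,y,z]_{3k} be the third Veronese subalgebra of ℂ[x,y,z] (all polynomials whose homogeneous components have degree divisible by 3). Then the Makar-Limanov invariant of A is trivial: the intersection of the kernels of all locally nilpotent ℂ-derivations of A equals the constants ℂ·1. -/

import Mathlib

open MvPolynomial

/-- The third Veronese subalgebra `A = ⊕_{k≥0} ℂ[x,y,z]_{3k}` of `ℂ[x,y,z]`: the
ℂ-subalgebra consisting of all polynomials each of whose monomials (hence each of whose
homogeneous components) has total degree divisible by 3.  Here `x = X 0`, `y = X 1`,
`z = X 2` in `MvPolynomial (Fin 3) ℂ`. -/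
noncomputable def veronese3 : Subalgebra ℂ (MvPolynomial (Fin 3) ℂ) where
  carrier := {p | ∀ d : Fin 3 →₀ ℕ, coeff d p ≠ 0 → 3 ∣ d.sum fun _ e => e}
  mul_mem' := by
    intro p q hp hq d hd
    rw [coeff_mul] at hd
    obtain ⟨⟨u, v⟩, huv, hne⟩ := Finset.exists_ne_zero_of_sum_ne_zero hd
    replace huv : u + v = d := by simpa using huv
    have hu : coeff u p ≠ 0 := left_ne_zero_of_mul hne
    have hv : coeff v q ≠ 0 := right_ne_zero_of_mul hne
    have hsum : (u + v).sum (fun _ e => e) = u.sum (fun _ e => e) + v.sum (fun _ e => e) :=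
      Finsupp.sum_add_index' (fun _ => rfl) (fun _ _ _ => rfl)
    have := dvd_add (hp u hu) (hq v hv)
    rw [← hsum, huv] at this
    exact this
  one_mem' := by
    intro d hd
    rw [coeff_one] at hd
    by_cases h : (0 : Fin 3 →₀ ℕ) = d
    · subst h; simp
    · simp [h] at hd
  add_mem' := by
    intro p q hp hq d hd
    rw [coeff_add] at hd
    by_cases h : coeff d p ≠ 0
    · exact hp d h
    · push_neg at h
      rw [h, zero_add] at hd
      exact hq d hd
  zero_mem' := by
    intro d hd
    simp at hd
  algebraMap_mem' := by
    intro r d hd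
    rw [algebraMap_eq, coeff_C] at hd
    by_cases h : (0 : Fin 3 →₀ ℕ) = d
    · subst h; simp
    · simp [h] at hd

/-! For `i ≠ j` the derivation `x_i ∂/∂x_j` of `ℂ[x, y, z]` preserves the total degree of every
monomial, so it restricts to the Veronese subalgebra, and it is locally nilpotent because each
application lowers the `x_j`-degree. An element of the Makar-Limanov invariant is therefore killed
by every `∂/∂x_j` (as `x_i` is not a zero divisor), hence is a constant in characteristic zero. -/

namespace Derivation

variable {R A : Type*} [CommSemiring R] [CommSemiring A] [Algebra R A]

def IsLocallyNilpotent (D : Derivation R A A) : Prop :=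
  ∀ a, ∃ n : ℕ, (⇑D)^[n] a = 0

def restrict (D : Derivation R A A) (S : Subalgebra R A) (hD : ∀ a ∈ S, D a ∈ S) :
    Derivation R S S where
  toFun a := ⟨D a, hD a a.2⟩
  map_add' a b := Subtype.ext (D.map_add a b)
  map_smul' r a := Subtype.ext (D.map_smul r a)
  map_one_eq_zero' := Subtype.ext D.map_one_eq_zero
  leibniz' a b := Subtype.ext (D.leibniz a b)

theorem coe_iterate_restrict (D : Derivation R A A) (S : Subalgebra R A)
    (hD : ∀ a ∈ S, D a ∈ S) (n : ℕ) (a : S) :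
    (((⇑(D.restrict S hD))^[n] a : S) : A) = (⇑D)^[n] a := by
  induction n generalizing a with
  | zero => rfl
  | succ n ih => exact ih (D.restrict S hD a)

theorem IsLocallyNilpotent.restrict {D : Derivation R A A} (hD : D.IsLocallyNilpotent)
    (S : Subalgebra R A) (hS : ∀ a ∈ S, D a ∈ S) : (D.restrict S hS).IsLocallyNilpotent := by
  intro a
  obtain ⟨n, hn⟩ := hD a
  exact ⟨n, Subtype.ext (by rw [coe_iterate_restrict, hn, ZeroMemClass.coe_zero])⟩

end Derivation

namespace MvPolynomial

variable {R σ : Type*} [CommSemiring R]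

theorem pderiv_eq_zero_of_degreeOf_eq_zero {i : σ} {p : MvPolynomial σ R}
    (h : degreeOf i p = 0) : pderiv i p = 0 := by
  ext m
  rw [coeff_pderiv, coeff_zero, notMem_support_iff.mp, zero_mul]
  intro hm
  simpa [h] using monomial_le_degreeOf i hm

theorem degreeOf_pderiv_le (i : σ) (p : MvPolynomial σ R) :
    degreeOf i (pderiv i p) ≤ degreeOf i p - 1 := by
  classical
  refine degreeOf_le_iff.mpr fun m hm => ?_
  rw [mem_support_iff, coeff_pderiv] at hm
  have := monomial_le_degreeOf i (mem_support_iff.mpr (left_ne_zero_of_mul hm))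
  simp only [Finsupp.add_apply, Finsupp.single_eq_same] at this
  omega

theorem iterate_X_mul_pderiv_eq_zero {i j : σ} (hij : i ≠ j) (p : MvPolynomial σ R) :
    (⇑(X (R := R) i • pderiv (R := R) j))^[degreeOf j p + 1] p = 0 := by
  set D := X (R := R) i • pderiv (R := R) j
  suffices ∀ n p, degreeOf j p < n → (⇑D)^[n] p = 0 from this _ p (Nat.lt_succ_self _)
  intro n
  induction n with
  | zero => intro p hp; omega
  | succ n ih =>
    intro p hp
    rw [Function.iterate_succ_apply]
    by_cases h0 : degreeOf j p = 0
    · rw [show D p = 0 by simp [D, pderiv_eq_zero_of_degreeOf_eq_zero h0]]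
      exact Function.iterate_fixed (map_zero D) n
    · apply ih
      rw [Derivation.smul_apply, smul_eq_mul, mul_comm, degreeOf_mul_X_of_ne _ hij.symm]
      have := degreeOf_pderiv_le j p
      omega

theorem isLocallyNilpotent_X_mul_pderiv {i j : σ} (hij : i ≠ j) :
    (X (R := R) i • pderiv (R := R) j).IsLocallyNilpotent :=
  fun p => ⟨_, iterate_X_mul_pderiv_eq_zero hij p⟩

theorem exists_degree_eq_of_coeff_X_mul_pderiv_ne_zero {i j : σ} {p : MvPolynomial σ R}
    {d : σ →₀ ℕ} (h : coeff d (X i * pderiv j p) ≠ 0) :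
    ∃ e, coeff e p ≠ 0 ∧ e.degree = d.degree := by
  classical
  rw [coeff_X_mul'] at h
  split_ifs at h with hi
  · refine ⟨d - Finsupp.single i 1 + Finsupp.single j 1, ?_, ?_⟩
    · rw [coeff_pderiv] at h
      exact left_ne_zero_of_mul h
    · have hle : Finsupp.single i 1 ≤ d :=
        Finsupp.single_le_iff.mpr (Nat.one_le_iff_ne_zero.mpr (Finsupp.mem_support_iff.mp hi))
      conv_rhs => rw [← tsub_add_cancel_of_le hle]
      simp only [map_add, Finsupp.degree_single]
  · exact (h rfl).elim

theorem eq_C_of_forall_pderiv_eq_zero [NoZeroDivisors R] [CharZero R] {p : MvPolynomial σ R}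
    (h : ∀ i, pderiv i p = 0) : p = C (coeff 0 p) := by
  classical
  ext d
  rw [coeff_C]
  split_ifs with hd
  · rw [hd]
  obtain ⟨i, hi⟩ : ∃ i, d i ≠ 0 := by
    by_contra! hall
    exact hd (Finsupp.ext hall).symm
  have hle : Finsupp.single i 1 ≤ d := Finsupp.single_le_iff.mpr (Nat.one_le_iff_ne_zero.mpr hi)
  have := coeff_pderiv (i := i) p (d - Finsupp.single i 1)
  rw [h i, coeff_zero, tsub_add_cancel_of_le hle, eq_comm, mul_eq_zero] at this
  exact this.resolve_right (Nat.cast_add_one_ne_zero _)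

end MvPolynomial

theorem X_mul_pderiv_mem_veronese3 (i j : Fin 3) {p : MvPolynomial (Fin 3) ℂ}
    (hp : p ∈ veronese3) : (X (R := ℂ) i • pderiv (R := ℂ) j) p ∈ veronese3 := by
  intro d hd
  rw [Derivation.smul_apply, smul_eq_mul] at hd
  obtain ⟨e, he, hdeg⟩ := exists_degree_eq_of_coeff_X_mul_pderiv_ne_zero hd
  have : 3 ∣ e.degree := hp e he
  rwa [hdeg] at this

/-- case `d = 9` of the Makar-Limanov assertion in Theorem 0.1. The
Makar-Limanov invariant of the third Veronese subalgebra `A = ⊕_{k≥0} ℂ[x,y,z]_{3k}` is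
trivial: an element of `A` lies in the kernel of every locally nilpotent ℂ-derivation of
`A` if and only if it is a constant, i.e. a scalar multiple of `1`. -/
theorem veronese3_makarLimanov_trivial (a : ↥veronese3) :
    (∀ D : Derivation ℂ ↥veronese3 ↥veronese3,
        (∀ x : ↥veronese3, ∃ n : ℕ, (⇑D)^[n] x = 0) → D a = 0) ↔
      ∃ c : ℂ, a = algebraMap ℂ ↥veronese3 c := by
  refine ⟨fun h => ?_, ?_⟩
  · have hpderiv : ∀ j, pderiv j (a : MvPolynomial (Fin 3) ℂ) = 0 := fun j => by
      have hne : j + 1 ≠ j := by fin_cases j <;> decide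
      have := congrArg Subtype.val <| h _ <| (isLocallyNilpotent_X_mul_pderiv hne).restrict
        veronese3 fun _ => X_mul_pderiv_mem_veronese3 _ _
      exact (mul_eq_zero.mp this).resolve_left (X_ne_zero _)
    exact ⟨_, Subtype.ext (eq_C_of_forall_pderiv_eq_zero hpderiv)⟩
  · rintro ⟨c, rfl⟩ D -
    exact D.map_algebraMap c
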